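/- arXiv:2305.17323 — 7 statements merged into one kernel-verified Lean document; each statement's English description precedes it below -/
import Mathlib

section
/- Let μ > 0, β̄ ≥ 0, and let (λ_k)_{k≥0} be positive reals satisfying λ_{k+1} = (α_{k+1}/(1 − μ α_{k+1})) · (λ_k / α_k), where (α_k) is any sequence with α₀ = λ₀/(μλ₀ + β̄) and 0 < α_k < 1/μ for k ≥ 1. Then for all k, α_k = λ_k / (μ ∑_{i=0}^k λ_i + β̄). -/
/-- If the dual weights satisfy the recurrence
`λ_{k+1} = (α_{k+1}/(1 - μ α_{k+1})) (λ_k / α_k)` with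
`α₀ = λ₀/(μ λ₀ + β̄)` and `0 < α_k < 1/μ` for `k ≥ 1`, then
`α_k = λ_k / (μ ∑_{i=0}^k λ_i + β̄)` for all `k`. -/
theorem stmt_2 (μ βbar : ℝ) (hμ : 0 < μ) (hβ : 0 ≤ βbar)
    (lam α : ℕ → ℝ) (hlam : ∀ k, 0 < lam k)
    (hα0 : α 0 = lam 0 / (μ * lam 0 + βbar))
    (hαpos : ∀ k, 1 ≤ k → 0 < α k ∧ α k < 1 / μ)
    (hrec : ∀ k, lam (k + 1) = (α (k + 1) / (1 - μ * α (k + 1))) * (lam k / α k)) :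
    ∀ k, α k = lam k / (μ * ∑ i ∈ Finset.range (k + 1), lam i + βbar) := by
  have hsum : ∀ k, 0 < μ * ∑ i ∈ Finset.range (k + 1), lam i + βbar := by
    intro k
    have : 0 < ∑ i ∈ Finset.range (k + 1), lam i :=
      Finset.sum_pos (fun i _ => hlam i) ⟨0, Finset.mem_range.mpr (Nat.succ_pos k)⟩
    positivity
  intro k
  induction k with
  | zero => simpa using hα0
  | succ k ih =>
    have hαk : α k ≠ 0 := by
      rcases Nat.eq_zero_or_pos k with h | h
      · subst h
        rw [hα0]
        exact ne_of_gt (div_pos (hlam 0) (by simpa using hsum 0))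
      · exact ne_of_gt (hαpos k h).1
    have hα1 := hαpos (k + 1) (Nat.le_add_left 1 k)
    have h1 : 0 < 1 - μ * α (k + 1) := by
      have := (mul_lt_mul_iff_right₀ hμ).mpr hα1.2
      rw [mul_one_div, div_self hμ.ne'] at this
      linarith
    -- lam k / α k = μ S_k + βbar
    have hIH : lam k / α k = μ * ∑ i ∈ Finset.range (k + 1), lam i + βbar := by
      rw [ih, div_div_eq_mul_div, mul_comm, mul_div_assoc, div_self (hlam k).ne', mul_one]
    have hr := hrec k
    rw [hIH, div_mul_eq_mul_div, eq_div_iff h1.ne'] at hr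
    have hS : μ * ∑ i ∈ Finset.range (k + 2), lam i + βbar
        = μ * lam (k + 1) + (μ * ∑ i ∈ Finset.range (k + 1), lam i + βbar) := by
      rw [Finset.sum_range_succ]; ring
    rw [eq_div_iff (hsum (k + 1)).ne', hS]
    nlinarith [hr]
end

section
/- Let f : E → ℝ be μ-strongly convex (μ > 0), let x* be its minimizer with p* = f(x*), and let (x_k) be generated by x_{k+1} = x_k − α_k g_k with g_k ∈ ∂f(x_k) and α_k = λ_k/(μ ∑_{i=0}^k λ_i) for positive weights λ_k. Then for each k, (μ/2)(∑_{i=0}^{k} λ_i)‖x_{k+1} − x*‖² ≤ (μ/2)(∑_{i=0}^{k−1} λ_i)‖x_k − x*‖² − λ_k (f(x_k) − p*) + (λ_k α_k / 2)‖g_k‖². -/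
open RealInnerProductSpace

/-!
Expanding the step gives
`‖x_{k+1} - x*‖² = ‖x_k - x*‖² - 2 α_k ⟪g_k, x_k - x*⟫ + α_k² ‖g_k‖²`.
Strong convexity at `y = x*` bounds `⟪g_k, x_k - x*⟫` below by
`f(x_k) - p* + (μ/2) ‖x_k - x*‖²`, and the choice of stepsize makes
`μ (∑_{i ≤ k} λ_i) α_k = λ_k`; multiplying by `(μ/2) ∑_{i ≤ k} λ_i`, the extra
`(μ/2) λ_k ‖x_k - x*‖²` from strong convexity is exactly what turns
`∑_{i ≤ k} λ_i` into `∑_{i < k} λ_i` on the right-hand side.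
-/

section

variable {E : Type*} [NormedAddCommGroup E] [InnerProductSpace ℝ E]

lemma norm_sub_smul_sub_sq (x v z : E) (t : ℝ) :
    ‖x - t • v - z‖ ^ 2 = ‖x - z‖ ^ 2 - 2 * t * ⟪v, x - z⟫ + t ^ 2 * ‖v‖ ^ 2 := by
  rw [sub_right_comm, norm_sub_sq_real, real_inner_smul_right, norm_smul, mul_pow,
    Real.norm_eq_abs, sq_abs, real_inner_comm]
  ring

lemma le_inner_of_strongConvex_subgradient {f : E → ℝ} {μ : ℝ} {x g y : E}
    (h : f y ≥ f x + ⟪g, y - x⟫ + (μ / 2) * ‖y - x‖ ^ 2) :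
    f x - f y + μ / 2 * ‖x - y‖ ^ 2 ≤ ⟪g, x - y⟫ := by
  rw [← neg_sub x y, inner_neg_right, norm_neg] at h
  linarith

lemma weighted_norm_sq_subgradient_step {μ S s l α a b : ℝ} {x g z : E}
    (hS : S = s + l) (hl : 0 ≤ l) (hα : μ * S * α = l)
    (hgrad : a - b + μ / 2 * ‖x - z‖ ^ 2 ≤ ⟪g, x - z⟫) :
    μ / 2 * S * ‖x - α • g - z‖ ^ 2 ≤
      μ / 2 * s * ‖x - z‖ ^ 2 - l * (a - b) + l * α / 2 * ‖g‖ ^ 2 := by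
  rw [norm_sub_smul_sub_sq]
  have hweighted := mul_le_mul_of_nonneg_left hgrad hl
  linear_combination hweighted + (α * ‖g‖ ^ 2 / 2 - ⟪g, x - z⟫) * hα
    + μ / 2 * ‖x - z‖ ^ 2 * hS

end

theorem stmt_10_general {E : Type*} [NormedAddCommGroup E] [InnerProductSpace ℝ E]
    (μ : ℝ) (hμ : 0 < μ) (f : E → ℝ) (xstar : E)
    (x g : ℕ → E) (lam α : ℕ → ℝ) (hlam : ∀ k, 0 < lam k)
    (hsub : ∀ k y, f y ≥ f (x k) + ⟪g k, y - x k⟫ + (μ / 2) * ‖y - x k‖ ^ 2)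
    (hα : ∀ k, α k = lam k / (μ * ∑ i ∈ Finset.range (k + 1), lam i))
    (hx : ∀ k, x (k + 1) = x k - α k • g k) :
    ∀ k, (μ / 2) * (∑ i ∈ Finset.range (k + 1), lam i) * ‖x (k + 1) - xstar‖ ^ 2 ≤
      (μ / 2) * (∑ i ∈ Finset.range k, lam i) * ‖x k - xstar‖ ^ 2
        - lam k * (f (x k) - f xstar) + (lam k * α k / 2) * ‖g k‖ ^ 2 := by
  intro k
  have hsum_pos : 0 < ∑ i ∈ Finset.range (k + 1), lam i :=
    Finset.sum_pos (fun i _ => hlam i) ⟨k, Finset.self_mem_range_succ k⟩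
  have hstep : μ * (∑ i ∈ Finset.range (k + 1), lam i) * α k = lam k := by
    rw [hα k]
    exact mul_div_cancel₀ _ (mul_pos hμ hsum_pos).ne'
  rw [hx k]
  exact weighted_norm_sq_subgradient_step (Finset.sum_range_succ lam k) (hlam k).le hstep
    (le_inner_of_strongConvex_subgradient (hsub k xstar))

/-- Primal inductive inequality for the subgradient method on a
`μ`-strongly convex function. -/
theorem stmt_10 {E : Type*} [NormedAddCommGroup E] [InnerProductSpace ℝ E]
    [FiniteDimensional ℝ E]
    (μ : ℝ) (hμ : 0 < μ) (f : E → ℝ) (xstar : E)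
    (hmin : ∀ y, f xstar ≤ f y)
    (x g : ℕ → E) (lam α : ℕ → ℝ) (hlam : ∀ k, 0 < lam k)
    (hsub : ∀ k y, f y ≥ f (x k) + ⟪g k, y - x k⟫ + (μ / 2) * ‖y - x k‖ ^ 2)
    (hα : ∀ k, α k = lam k / (μ * ∑ i ∈ Finset.range (k + 1), lam i))
    (hx : ∀ k, x (k + 1) = x k - α k • g k) :
    ∀ k, (μ / 2) * (∑ i ∈ Finset.range (k + 1), lam i) * ‖x (k + 1) - xstar‖ ^ 2 ≤
      (μ / 2) * (∑ i ∈ Finset.range k, lam i) * ‖x k - xstar‖ ^ 2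
        - lam k * (f (x k) - f xstar) + (lam k * α k / 2) * ‖g k‖ ^ 2 :=
  stmt_10_general μ hμ f xstar x g lam α hlam hsub hα hx
end

section
/- Under the setup of the subgradient method x_{k+1} = x_k − α_k g_k for a μ-strongly convex f with minimizer x*, weights λ_k > 0, stepsizes α_k = λ_k/(μ∑_{i=0}^k λ_i), if additionally ‖g_k‖ ≤ M for all k, then for every T ≥ 1: (∑_{k=0}^{T−1} λ_k f(x_k))/(∑_{k=0}^{T−1} λ_k) − p* + (μ/2)‖x_T − x*‖² ≤ M² (∑_{k=0}^{T−1} λ_k α_k)/(2 ∑_{k=0}^{T−1} λ_k). -/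
open RealInnerProductSpace

/-- Weighted-average primal convergence of the subgradient method for
strongly convex `f` with bounded subgradients. -/
theorem stmt_11 {E : Type*} [NormedAddCommGroup E] [InnerProductSpace ℝ E]
    [FiniteDimensional ℝ E]
    (μ M : ℝ) (hμ : 0 < μ) (f : E → ℝ) (xstar : E)
    (hmin : ∀ y, f xstar ≤ f y)
    (x g : ℕ → E) (lam α : ℕ → ℝ) (hlam : ∀ k, 0 < lam k)
    (hsub : ∀ k y, f y ≥ f (x k) + ⟪g k, y - x k⟫ + (μ / 2) * ‖y - x k‖ ^ 2)
    (hM : ∀ k, ‖g k‖ ≤ M)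
    (hα : ∀ k, α k = lam k / (μ * ∑ i ∈ Finset.range (k + 1), lam i))
    (hx : ∀ k, x (k + 1) = x k - α k • g k) :
    ∀ T : ℕ, 1 ≤ T →
      (∑ k ∈ Finset.range T, lam k * f (x k)) / (∑ k ∈ Finset.range T, lam k)
          - f xstar + (μ / 2) * ‖x T - xstar‖ ^ 2 ≤
        M ^ 2 * (∑ k ∈ Finset.range T, lam k * α k) /
          (2 * ∑ k ∈ Finset.range T, lam k) := by
  intro T hT
  have hSpos : ∀ k : ℕ, 0 < ∑ i ∈ Finset.range (k + 1), lam i := fun k =>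
    Finset.sum_pos (fun i _ => hlam i) ⟨0, Finset.mem_range.2 (Nat.succ_pos k)⟩
  have hLpos : 0 < ∑ k ∈ Finset.range T, lam k := by
    obtain ⟨T, rfl⟩ := Nat.exists_eq_add_of_le hT
    simpa [Nat.add_comm] using hSpos T
  have hαpos : ∀ k, 0 < α k := fun k => by
    rw [hα k]; exact div_pos (hlam k) (mul_pos hμ (hSpos k))
  have hM0 : 0 ≤ M := le_trans (norm_nonneg _) (hM 0)
  -- per-step inequality with telescoping potential
  have key : ∀ k, lam k * (f (x k) - f xstar) ≤
      (μ / 2) * ((∑ i ∈ Finset.range k, lam i) * ‖x k - xstar‖ ^ 2)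
      - (μ / 2) * ((∑ i ∈ Finset.range (k + 1), lam i) * ‖x (k + 1) - xstar‖ ^ 2)
      + M ^ 2 / 2 * (lam k * α k) := by
    intro k
    set S := ∑ i ∈ Finset.range (k + 1), lam i with hS
    set B := ‖x k - xstar‖ ^ 2 with hB
    set B' := ‖x (k + 1) - xstar‖ ^ 2 with hB'
    have hlk : lam k = μ * S * α k := by
      rw [hα k, ← hS]; field_simp [hμ.ne', (hSpos k).ne']; exact (mul_div_cancel_right₀ _ (hSpos k).ne').symm
    have hexp : B' = B - 2 * (α k * ⟪g k, x k - xstar⟫) + (α k) ^ 2 * ‖g k‖ ^ 2 := by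
      rw [hB', hx k]
      have h : x k - α k • g k - xstar = (x k - xstar) - α k • g k := by abel
      rw [h, norm_sub_sq_real, real_inner_smul_right, real_inner_comm, norm_smul,
        Real.norm_eq_abs, mul_pow, sq_abs]
    have h1 : f (x k) - f xstar ≤ ⟪g k, x k - xstar⟫ - μ / 2 * B := by
      have := hsub k xstar
      have h2 : ⟪g k, xstar - x k⟫ = -⟪g k, x k - xstar⟫ := by
        rw [show xstar - x k = -(x k - xstar) by abel, inner_neg_right]
      have h3 : ‖xstar - x k‖ = ‖x k - xstar‖ := norm_sub_rev _ _
      rw [h2, h3, ← hB] at this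
      linarith
    have hlin : lam k * ⟪g k, x k - xstar⟫ =
        μ * S / 2 * (B - B') + lam k * α k / 2 * ‖g k‖ ^ 2 := by
      have h3 : α k * ⟪g k, x k - xstar⟫ = (B - B' + α k ^ 2 * ‖g k‖ ^ 2) / 2 := by
        linarith
      calc lam k * ⟪g k, x k - xstar⟫ = μ * S * (α k * ⟪g k, x k - xstar⟫) := by
            rw [hlk]; ring
        _ = μ * S * ((B - B' + α k ^ 2 * ‖g k‖ ^ 2) / 2) := by rw [h3]
        _ = μ * S / 2 * (B - B') + (μ * S * α k) * α k * ‖g k‖ ^ 2 / 2 := by ring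
        _ = μ * S / 2 * (B - B') + lam k * α k / 2 * ‖g k‖ ^ 2 := by
            rw [← hlk]; ring
    have hSsplit : S = (∑ i ∈ Finset.range k, lam i) + lam k := by
      rw [hS, Finset.sum_range_succ]
    have hg2 : ‖g k‖ ^ 2 ≤ M ^ 2 := by
      have := hM k
      nlinarith [norm_nonneg (g k)]
    have hmul : lam k * (f (x k) - f xstar) ≤
        lam k * (⟪g k, x k - xstar⟫ - μ / 2 * B) :=
      mul_le_mul_of_nonneg_left h1 (hlam k).le
    have hla : 0 ≤ lam k * α k := le_of_lt (mul_pos (hlam k) (hαpos k))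
    have hS' : (∑ i ∈ Finset.range k, lam i) = S - lam k := by linarith [hSsplit]
    rw [hS']
    nlinarith [hmul, hlin,
      mul_le_mul_of_nonneg_left hg2 (by positivity : (0:ℝ) ≤ lam k * α k / 2)]
  -- sum and telescope
  have htel : ∑ k ∈ Finset.range T,
      ((μ / 2) * ((∑ i ∈ Finset.range k, lam i) * ‖x k - xstar‖ ^ 2)
        - (μ / 2) * ((∑ i ∈ Finset.range (k + 1), lam i) * ‖x (k + 1) - xstar‖ ^ 2)) =
      (μ / 2) * ((∑ i ∈ Finset.range 0, lam i) * ‖x 0 - xstar‖ ^ 2)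
      - (μ / 2) * ((∑ i ∈ Finset.range T, lam i) * ‖x T - xstar‖ ^ 2) :=
    Finset.sum_range_sub'
      (fun k => (μ / 2) * ((∑ i ∈ Finset.range k, lam i) * ‖x k - xstar‖ ^ 2)) T
  have hsum : ∑ k ∈ Finset.range T, lam k * (f (x k) - f xstar) ≤
      - ((μ / 2) * ((∑ k ∈ Finset.range T, lam k) * ‖x T - xstar‖ ^ 2))
      + M ^ 2 / 2 * ∑ k ∈ Finset.range T, lam k * α k := by
    calc ∑ k ∈ Finset.range T, lam k * (f (x k) - f xstar)
        ≤ ∑ k ∈ Finset.range T,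
            ((μ / 2) * ((∑ i ∈ Finset.range k, lam i) * ‖x k - xstar‖ ^ 2)
            - (μ / 2) * ((∑ i ∈ Finset.range (k + 1), lam i) * ‖x (k + 1) - xstar‖ ^ 2)
            + M ^ 2 / 2 * (lam k * α k)) :=
          Finset.sum_le_sum fun k _ => key k
      _ = - ((μ / 2) * ((∑ k ∈ Finset.range T, lam k) * ‖x T - xstar‖ ^ 2))
          + M ^ 2 / 2 * ∑ k ∈ Finset.range T, lam k * α k := by
          rw [Finset.sum_add_distrib, htel, ← Finset.mul_sum]
          simp
  have hexpand : ∑ k ∈ Finset.range T, lam k * (f (x k) - f xstar) =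
      (∑ k ∈ Finset.range T, lam k * f (x k))
      - (∑ k ∈ Finset.range T, lam k) * f xstar := by
    rw [Finset.sum_mul]
    rw [← Finset.sum_sub_distrib]
    exact Finset.sum_congr rfl fun k _ => by ring
  set L := ∑ k ∈ Finset.range T, lam k with hLdef
  have heq : (∑ k ∈ Finset.range T, lam k * f (x k)) / L - f xstar
      + (μ / 2) * ‖x T - xstar‖ ^ 2 =
      ((∑ k ∈ Finset.range T, lam k * f (x k)) - L * f xstar
        + (μ / 2) * (L * ‖x T - xstar‖ ^ 2)) / L := by
    field_simp
  rw [heq, div_le_div_iff₀ hLpos (by linarith : (0:ℝ) < 2 * L)]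
  rw [hexpand] at hsum
  nlinarith [hsum, hLpos]
end

section
/- Let f be μ-strongly convex with minimizer x* and subgradients bounded by M along the trajectory of x_{k+1} = x_k − α_k g_k with α_k = 2/(μ(k+2)). Then for all T ≥ 1, (∑_{k=0}^{T−1} (k+1) f(x_k))/(T(T+1)/2) − p* + (μ/2)‖x_T − x*‖² ≤ 4M²/(μ(T+1)). -/
open RealInnerProductSpace

set_option maxHeartbeats 1000000

lemma stmt_12_gauss (T : ℕ) : ∑ k ∈ Finset.range T, ((k:ℝ)+1) = (T:ℝ) * ((T:ℝ)+1) / 2 := by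
  induction T with
  | zero => simp
  | succ n ih => rw [Finset.sum_range_succ, ih]; push_cast; ring

/-- The `O(1/T)` rate of the subgradient method with `α_k = 2/(μ(k+2))`
and weights `λ_k = k+1`. -/
theorem stmt_12 {E : Type*} [NormedAddCommGroup E] [InnerProductSpace ℝ E]
    [FiniteDimensional ℝ E]
    (μ M : ℝ) (hμ : 0 < μ) (f : E → ℝ) (xstar : E)
    (hmin : ∀ y, f xstar ≤ f y)
    (x g : ℕ → E) (α : ℕ → ℝ)
    (hsub : ∀ k y, f y ≥ f (x k) + ⟪g k, y - x k⟫ + (μ / 2) * ‖y - x k‖ ^ 2)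
    (hM : ∀ k, ‖g k‖ ≤ M)
    (hα : ∀ k, α k = 2 / (μ * (k + 2)))
    (hx : ∀ k, x (k + 1) = x k - α k • g k) :
    ∀ T : ℕ, 1 ≤ T →
      (∑ k ∈ Finset.range T, ((k : ℝ) + 1) * f (x k)) / (T * (T + 1) / 2)
          - f xstar + (μ / 2) * ‖x T - xstar‖ ^ 2 ≤
        4 * M ^ 2 / (μ * (T + 1)) := by
  -- the Lyapunov-type quantity
  set F : ℕ → ℝ := fun k => μ^2/4 * ((k:ℝ) * ((k:ℝ)+1) * ‖x k - xstar‖^2) with hF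
  have step : ∀ k : ℕ, μ * (((k:ℝ)+1) * (f (x k) - f xstar)) ≤
      F k - F (k+1) + M^2 := by
    intro k
    set c : ℝ := (k:ℝ) with hcdef
    have hc : (0:ℝ) ≤ c := Nat.cast_nonneg k
    have hden : (0:ℝ) < μ * (c+2) := by positivity
    have hα2 : α k * (μ * (c+2)) = 2 := by
      rw [hα k]; field_simp; rw [hcdef]
    have hαpos : 0 < α k := by rw [hα k]; positivity
    have h1 : f (x k) - f xstar ≤ ⟪g k, x k - xstar⟫ - μ/2 * ‖x k - xstar‖^2 := by
      have h := hsub k xstar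
      rw [show xstar - x k = -(x k - xstar) by abel] at h
      rw [inner_neg_right, norm_neg] at h
      linarith
    have h2 : ‖x (k+1) - xstar‖^2 = ‖x k - xstar‖^2
        - 2*(α k)*⟪g k, x k - xstar⟫ + (α k)^2*‖g k‖^2 := by
      rw [hx k, show x k - α k • g k - xstar = (x k - xstar) - α k • g k by abel,
        norm_sub_sq_real, real_inner_smul_right, real_inner_comm, norm_smul]
      rw [mul_pow, Real.norm_eq_abs, sq_abs]
      ring
    have hGnn : (0:ℝ) ≤ ‖g k‖^2 := by positivity
    have hG : ‖g k‖^2 ≤ M^2 := by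
      have := hM k
      nlinarith [norm_nonneg (g k)]
    have hD' : (0:ℝ) ≤ ‖x (k+1) - xstar‖^2 := by positivity
    have hDnn : (0:ℝ) ≤ ‖x k - xstar‖^2 := by positivity
    -- auxiliary bound on the stepsize term
    have haux : μ * (c+1) * (α k) * ‖g k‖^2 ≤ 2 * M^2 := by
      rw [hα k]
      rw [show μ * (c+1) * (2 / (μ * (c+2))) * ‖g k‖^2
          = (2 * (c+1) * ‖g k‖^2) / (c+2) by field_simp]
      rw [div_le_iff₀ (by linarith : (0:ℝ) < c+2)]
      nlinarith
    -- inner product identity multiplied out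
    have hIe : 4 * ⟪g k, x k - xstar⟫ =
        μ*(c+2) * (‖x k - xstar‖^2 - ‖x (k+1) - xstar‖^2) + 2 * (α k) * ‖g k‖^2 := by
      have e : 2*(α k)*⟪g k, x k - xstar⟫
          = ‖x k - xstar‖^2 - ‖x (k+1) - xstar‖^2 + (α k)^2*‖g k‖^2 := by
        linarith [h2]
      have e2 := congrArg (fun t => t * (μ * (c+2))) e
      nlinarith [hα2, e2]
    simp only [hF]
    push_cast
    nlinarith [mul_le_mul_of_nonneg_left h1 (by positivity : (0:ℝ) ≤ μ * (c+1)),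
      hIe, haux, hD', hDnn, mul_nonneg (mul_nonneg hμ.le hc) hD',
      mul_le_mul_of_nonneg_left hIe.le (by positivity : (0:ℝ) ≤ μ * (c+1) / 4)]
  intro T hT
  have hT1 : (1:ℝ) ≤ (T:ℝ) := by exact_mod_cast hT
  have hsum : μ * ∑ k ∈ Finset.range T, (((k:ℝ)+1) * (f (x k) - f xstar)) ≤
      - F T + T * M^2 := by
    rw [Finset.mul_sum]
    calc ∑ k ∈ Finset.range T, μ * (((k:ℝ)+1) * (f (x k) - f xstar))
        ≤ ∑ k ∈ Finset.range T, (F k - F (k+1) + M^2) :=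
          Finset.sum_le_sum fun k _ => step k
      _ = (F 0 - F T) + T * M^2 := by
          rw [Finset.sum_add_distrib, Finset.sum_range_sub' F, Finset.sum_const,
            Finset.card_range, nsmul_eq_mul]
      _ = - F T + T * M^2 := by simp [hF]
  have hgauss := stmt_12_gauss T
  obtain ⟨Q, hQd⟩ : ∃ q : ℝ, q = (T:ℝ) * ((T:ℝ)+1) / 2 := ⟨_, rfl⟩
  have hQ : (0:ℝ) < Q := by rw [hQd]; nlinarith
  have hA : ∑ k ∈ Finset.range T, (((k:ℝ)+1) * (f (x k) - f xstar))
      = (∑ k ∈ Finset.range T, ((k:ℝ)+1) * f (x k)) - Q * f xstar := by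
    rw [hQd, ← hgauss, Finset.sum_mul, ← Finset.sum_sub_distrib]
    congr 1; ext k; ring
  rw [hA] at hsum
  set B := ∑ k ∈ Finset.range T, ((k:ℝ)+1) * f (x k) with hBdef
  set D := ‖x T - xstar‖^2 with hDdef
  have hDnn : (0:ℝ) ≤ D := by positivity
  have hM2 : (0:ℝ) ≤ M^2 := by positivity
  have hFT : F T = μ^2/4 * ((T:ℝ) * ((T:ℝ)+1) * D) := rfl
  rw [hFT] at hsum
  have hr : (0:ℝ) < μ * ((T:ℝ)+1) := by positivity
  have key : B - Q * f xstar + μ/2 * D * Q ≤ 4 * M^2 * Q / (μ * ((T:ℝ)+1)) := by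
    rw [le_div_iff₀ hr]
    rw [hQd] at hsum ⊢
    nlinarith [mul_le_mul_of_nonneg_left hsum (by linarith : (0:ℝ) ≤ (T:ℝ)+1),
      mul_nonneg (mul_nonneg (by linarith : (0:ℝ) ≤ (T:ℝ))
        (by linarith : (0:ℝ) ≤ (T:ℝ)+1)) hM2, hQd]
  have hQne : Q ≠ 0 := ne_of_gt hQ
  have hrne : μ * ((T:ℝ)+1) ≠ 0 := ne_of_gt hr
  calc B / ((T:ℝ) * ((T:ℝ)+1) / 2) - f xstar + μ/2 * D
      = (B - Q * f xstar + μ/2 * D * Q) / Q := by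
        rw [← hQd, add_div, sub_div, mul_div_cancel_right₀ _ hQne]
        rw [mul_comm Q (f xstar), mul_div_cancel_right₀ _ hQne]
    _ ≤ (4 * M^2 * Q / (μ * ((T:ℝ)+1))) / Q := by gcongr
    _ = 4 * M^2 / (μ * ((T:ℝ)+1)) := by
        rw [div_div, mul_comm (μ * ((T:ℝ)+1)) Q, ← div_div,
          mul_div_assoc, div_self hQne, mul_one]
end

section
/- Let μ > 0, positive weights λ₀,…,λ_{T−1} and stepsizes α_k = λ_k/(μ ∑_{i=0}^k λ_i). Define φ(λ_T) = (∑_{k=0}^{T} λ_k α_k)/(∑_{k=0}^{T} λ_k), where α_T = λ_T/(μ∑_{k=0}^T λ_k) is implied. Then λ_T = (∑_{k=0}^{T−1} λ_k · ∑_{k=0}^{T−1} λ_k α_k)/(∑_{k=0}^{T−1} λ_k (2/μ − α_k)) is the unique positive critical point of φ, i.e., the unique λ_T > 0 with dφ/dλ_T = 0. -/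
/-!
With `S = ∑_{k<T} λ_k` and `A = ∑_{k<T} λ_k α_k`, the quotient rule gives
`φ'(t) = (2tS/μ - A(S + t)) / (S + t)³`, whose numerator is affine in `t` with slope
`2S/μ - A = ∑_{k<T} λ_k (2/μ - α_k) > 0`; hence it has exactly one zero, `t = SA/(2S/μ - A)`.
-/

open Finset

theorem hasDerivAt_add_sq_div_mul_div {μ S A t : ℝ} (hμ : μ ≠ 0) (ht : S + t ≠ 0) :
    HasDerivAt (fun x => (A + x ^ 2 / (μ * (S + x))) / (S + x))
      ((2 * t * S / μ - A * (S + t)) / (S + t) ^ 3) t := by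
  have hlin : HasDerivAt (fun x : ℝ => S + x) 1 t := (hasDerivAt_id t).const_add S
  have hsq : HasDerivAt (fun x : ℝ => x ^ 2) (2 * t) t := by
    simpa using hasDerivAt_pow 2 t
  have hquot := ((hsq.div (hlin.const_mul μ) (mul_ne_zero hμ ht)).const_add A).div hlin ht
  refine hquot.congr_deriv ?_
  simp only [Pi.div_apply]
  field_simp
  ring

theorem deriv_add_sq_div_mul_div_eq_zero_iff {μ S A t : ℝ} (hμ : μ ≠ 0) (ht : S + t ≠ 0)
    (hslope : 2 / μ * S - A ≠ 0) :
    deriv (fun x => (A + x ^ 2 / (μ * (S + x))) / (S + x)) t = 0 ↔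
      t = S * A / (2 / μ * S - A) := by
  rw [(hasDerivAt_add_sq_div_mul_div hμ ht).deriv, div_eq_zero_iff,
    or_iff_left (pow_ne_zero 3 ht), eq_div_iff hslope]
  constructor <;> intro h
  · linear_combination h
  · linear_combination h

theorem stmt_13_general (μ : ℝ) (hμ : 0 < μ) (T : ℕ) (hT : 1 ≤ T)
    (lam α : ℕ → ℝ) (hlam : ∀ k, k < T → 0 < lam k)
    (hαle : ∀ k, k < T → α k ≤ 1 / μ)
    (φ : ℝ → ℝ)
    (hφ : ∀ t, φ t =
      ((∑ k ∈ Finset.range T, lam k * α k) +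
          t ^ 2 / (μ * ((∑ k ∈ Finset.range T, lam k) + t))) /
        ((∑ k ∈ Finset.range T, lam k) + t)) :
    ∀ t : ℝ, 0 < t →
      (deriv φ t = 0 ↔
        t = ((∑ k ∈ Finset.range T, lam k) * (∑ k ∈ Finset.range T, lam k * α k)) /
            (∑ k ∈ Finset.range T, lam k * (2 / μ - α k))) := by
  intro t ht
  have hS : 0 ≤ ∑ k ∈ range T, lam k :=
    sum_nonneg fun k hk => (hlam k (mem_range.mp hk)).le
  have hslope_pos : 0 < ∑ k ∈ range T, lam k * (2 / μ - α k) := by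
    refine sum_pos (fun k hk => ?_) (nonempty_range_iff.mpr (by omega))
    have hk := mem_range.mp hk
    have hgap : 0 < 2 / μ - α k := by
      linarith [hαle k hk, (by ring : 2 / μ = 1 / μ + 1 / μ), one_div_pos.mpr hμ]
    exact mul_pos (hlam k hk) hgap
  have hslope : ∑ k ∈ range T, lam k * (2 / μ - α k) =
      2 / μ * ∑ k ∈ range T, lam k - ∑ k ∈ range T, lam k * α k := by
    rw [mul_sum, ← sum_sub_distrib]
    exact sum_congr rfl fun k _ => by ring
  rw [funext hφ, hslope]
  exact deriv_add_sq_div_mul_div_eq_zero_iff hμ.ne' (by linarith) (hslope ▸ hslope_pos.ne')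

/-- The greedily optimal next dual weight `λ_T` from \eqref{eq:optimal-lambda}:
it is the unique positive critical point of
`φ(t) = (∑_{k<T} λ_k α_k + t²/(μ(S+t)))/(S+t)` where `S = ∑_{k<T} λ_k`. -/
theorem stmt_13 (μ : ℝ) (hμ : 0 < μ) (T : ℕ) (hT : 1 ≤ T)
    (lam α : ℕ → ℝ) (hlam : ∀ k, k < T → 0 < lam k)
    (hα : ∀ k, k < T → α k = lam k / (μ * ∑ i ∈ Finset.range (k + 1), lam i))
    (hαle : ∀ k, k < T → α k ≤ 1 / μ)
    (φ : ℝ → ℝ)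
    (hφ : ∀ t, φ t =
      ((∑ k ∈ Finset.range T, lam k * α k) +
          t ^ 2 / (μ * ((∑ k ∈ Finset.range T, lam k) + t))) /
        ((∑ k ∈ Finset.range T, lam k) + t)) :
    ∀ t : ℝ, 0 < t →
      (deriv φ t = 0 ↔
        t = ((∑ k ∈ Finset.range T, lam k) * (∑ k ∈ Finset.range T, lam k * α k)) /
            (∑ k ∈ Finset.range T, lam k * (2 / μ - α k))) :=
  stmt_13_general μ hμ T hT lam α hlam hαle φ hφ
end

section
/- Let f₀ be the sum f₀ = f^{(1)} + f^{(2)} where f^{(1)} is convex and M-Lipschitz and f^{(2)} is convex with L-Lipschitz gradient. Then for any points x, y and any subgradients g ∈ ∂f₀(x), g_y ∈ ∂f₀(y): ‖g‖² ≤ 6L(f₀(x) − f₀(y)) + 6L(f₀(y) − inf ĥ) + 6M², where ĥ(z) = f^{(2)}(z) + f^{(1)}(y) + ⟨g_y − ∇f^{(2)}(y), z − y⟩ satisfies ĥ ≤ f₀ and ĥ(y) = f₀(y). -/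
/-!
Subtracting the gradient of the smooth part turns the subgradients `g` at `x` and `gy` at `y` into
subgradients `u = g - ∇f⁽²⁾(x)` and `v = gy - ∇f⁽²⁾(y)` of `f⁽¹⁾`, and Lipschitz continuity
bounds both by `M`. The model `ĥ` is `L`-smooth with `∇ĥ(x) = ∇f⁽²⁾(x) + v`, so one gradient step
of length `1/L` gives `‖∇ĥ(x)‖² ≤ 2L (ĥ(x) - inf ĥ)`, and `ĥ(x) ≤ f₀(x)` because `v` is a
subgradient of `f⁽¹⁾` at `y`. Since `g = u - v + ∇ĥ(x)`, the bound follows from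
`‖a - b + c‖² ≤ 3 (‖a‖² + ‖b‖² + ‖c‖²)`.
-/

open RealInnerProductSpace Set Filter Topology

theorem sq_norm_sub_add_le {E : Type*} [SeminormedAddCommGroup E] (u v w : E) :
    ‖u - v + w‖ ^ 2 ≤ 3 * (‖u‖ ^ 2 + ‖v‖ ^ 2 + ‖w‖ ^ 2) := by
  have h : ‖u - v + w‖ ≤ ‖u‖ + ‖v‖ + ‖w‖ :=
    (norm_add_le _ _).trans (by linarith [norm_sub_le u v])
  nlinarith [norm_nonneg (u - v + w), sq_nonneg (‖u‖ - ‖v‖), sq_nonneg (‖u‖ - ‖w‖),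
    sq_nonneg (‖v‖ - ‖w‖)]

section

variable {E : Type*} [NormedAddCommGroup E] [InnerProductSpace ℝ E]

def HasSubgradientAt (f : E → ℝ) (s x : E) : Prop :=
  ∀ z, f x + ⟪s, z - x⟫ ≤ f z

theorem HasSubgradientAt.norm_le {f : E → ℝ} {M : ℝ} (hM : 0 ≤ M)
    (hf : ∀ z w, |f z - f w| ≤ M * ‖z - w‖) {s x : E} (hs : HasSubgradientAt f s x) :
    ‖s‖ ≤ M := by
  rcases (norm_nonneg s).eq_or_lt with hs0 | hs0
  · rw [← hs0]; exact hM
  have hlip : f (x + s) - f x ≤ M * ‖s‖ := by simpa using (abs_le.mp (hf (x + s) x)).2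
  have hsub : f x + ‖s‖ ^ 2 ≤ f (x + s) := by simpa [real_inner_self_eq_norm_sq] using hs (x + s)
  nlinarith

theorem sq_norm_le_of_forall_le_add_inner_add_sq {L : ℝ} (hL : 0 < L) {f : E → ℝ} {G x : E}
    (hf : ∀ b, f b ≤ f x + ⟪G, b - x⟫ + L / 2 * ‖b - x‖ ^ 2) (hbdd : BddBelow (range f)) :
    ‖G‖ ^ 2 ≤ 2 * L * (f x - ⨅ z, f z) := by
  have hstep : f (x - L⁻¹ • G) ≤ f x - ‖G‖ ^ 2 / (2 * L) := by
    calc f (x - L⁻¹ • G) ≤ f x + ⟪G, -(L⁻¹ • G)⟫ + L / 2 * ‖-(L⁻¹ • G)‖ ^ 2 := by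
          simpa using hf (x - L⁻¹ • G)
      _ = f x - ‖G‖ ^ 2 / (2 * L) := by
          rw [inner_neg_right, real_inner_smul_right, real_inner_self_eq_norm_sq, norm_neg,
            norm_smul, Real.norm_of_nonneg (inv_nonneg.mpr hL.le)]
          field_simp
          ring
  have hinf : (⨅ z, f z) ≤ f (x - L⁻¹ • G) := ciInf_le hbdd _
  have h : ‖G‖ ^ 2 / (2 * L) ≤ f x - ⨅ z, f z := by linarith
  rwa [div_le_iff₀ (by positivity), mul_comm] at h

end

section

variable {E : Type*} [NormedAddCommGroup E] [InnerProductSpace ℝ E] [CompleteSpace E]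

theorem HasGradientAt.hasDerivAt_comp_add_smul {f : E → ℝ} {G a d : E} {t : ℝ}
    (hf : HasGradientAt f G (a + t • d)) :
    HasDerivAt (fun s : ℝ => f (a + s • d)) ⟪G, d⟫ t := by
  have hline : HasDerivAt (fun s : ℝ => a + s • d) d t := by
    simpa using ((hasDerivAt_id t).smul_const d).const_add a
  exact hf.hasFDerivAt.comp_hasDerivAt t hline

theorem le_add_inner_add_sq_of_lipschitz_gradient {L : ℝ} {f : E → ℝ} {f' : E → E}
    (hf : ∀ z, HasGradientAt f (f' z) z) (hf' : ∀ z w, ‖f' z - f' w‖ ≤ L * ‖z - w‖)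
    (a b : E) : f b ≤ f a + ⟪f' a, b - a⟫ + L / 2 * ‖b - a‖ ^ 2 := by
  set d := b - a
  have hderiv (t : ℝ) : HasDerivAt (fun s : ℝ => f (a + s • d)) ⟪f' (a + t • d), d⟫ t :=
    (hf _).hasDerivAt_comp_add_smul
  have hbound (t : ℝ) : HasDerivAt (fun s : ℝ => f a + s * ⟪f' a, d⟫ + L / 2 * (s ^ 2 * ‖d‖ ^ 2))
      (⟪f' a, d⟫ + L * t * ‖d‖ ^ 2) t := by
    refine HasDerivAt.congr_deriv ((((hasDerivAt_id t).mul_const ⟪f' a, d⟫).const_add (f a)).add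
      (((hasDerivAt_pow 2 t).mul_const (‖d‖ ^ 2)).const_mul (L / 2))) ?_
    norm_num
    ring
  have hcompare := image_le_of_deriv_right_le_deriv_boundary (a := 0) (b := 1)
    (fun t _ => (hderiv t).continuousAt.continuousWithinAt) (fun t _ => (hderiv t).hasDerivWithinAt)
    (by simp) (fun t _ => (hbound t).continuousAt.continuousWithinAt)
    (fun t _ => (hbound t).hasDerivWithinAt) ?_ (right_mem_Icc.mpr zero_le_one)
  · simpa [d] using hcompare
  rintro t ⟨ht, -⟩
  have hlip : ‖f' (a + t • d) - f' a‖ ≤ L * (t * ‖d‖) := by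
    simpa [norm_smul, abs_of_nonneg ht] using hf' (a + t • d) a
  have := real_inner_le_norm (f' (a + t • d) - f' a) d
  rw [inner_sub_left] at this
  nlinarith [norm_nonneg d]

theorem ConvexOn.hasSubgradientAt_sub_of_add {f₁ f₂ : E → ℝ} (hf₁ : ConvexOn ℝ univ f₁)
    {G s x : E} (hf₂ : HasGradientAt f₂ G x) (hs : HasSubgradientAt (f₁ + f₂) s x) :
    HasSubgradientAt f₁ (s - G) x := by
  intro z
  set d := z - x
  -- Along `[x, z]`, convexity bounds the difference quotient of `f₁` by its value at `t = 1`,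
  -- and the subgradient inequality bounds it below by `⟪s, d⟫` minus that of `f₂`.
  have hlim : Tendsto (fun t : ℝ => ⟪s, d⟫ - t⁻¹ • (f₂ (x + t • d) - f₂ x)) (𝓝[>] 0)
      (𝓝 ⟪s - G, d⟫) := by
    rw [inner_sub_left]
    exact tendsto_const_nhds.sub (hf₂.hasFDerivAt.hasLineDerivAt d).tendsto_slope_zero_right
  suffices h : ∀ t ∈ Ioc (0 : ℝ) 1, ⟪s, d⟫ - t⁻¹ • (f₂ (x + t • d) - f₂ x) ≤ f₁ z - f₁ x by
    have := le_of_tendsto hlim (eventually_of_mem (Ioc_mem_nhdsGT zero_lt_one) h)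
    linarith
  rintro t ⟨ht0, ht1⟩
  have hconv : f₁ (x + t • d) ≤ (1 - t) * f₁ x + t * f₁ z := by
    have h := hf₁.2 (mem_univ x) (mem_univ z) (sub_nonneg.mpr ht1) ht0.le (by ring)
    have hpt : (1 - t) • x + t • z = x + t • d := by
      simp only [d, smul_sub, sub_smul, one_smul]
      abel
    rwa [hpt] at h
  have hsub := hs (x + t • d)
  rw [add_sub_cancel_left, real_inner_smul_right, Pi.add_apply, Pi.add_apply] at hsub
  rw [smul_eq_mul, ← mul_le_mul_iff_of_pos_left ht0, mul_sub, mul_inv_cancel_left₀ ht0.ne']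
  linarith

end

theorem stmt_14_general {E : Type*} [NormedAddCommGroup E] [InnerProductSpace ℝ E]
    [FiniteDimensional ℝ E]
    (M L : ℝ) (hM : 0 ≤ M) (hL : 0 < L)
    (f₀ f₁ f₂ : E → ℝ) (hsum : ∀ z, f₀ z = f₁ z + f₂ z)
    (hf₁conv : ConvexOn ℝ Set.univ f₁)
    (hf₁lip : ∀ z w, |f₁ z - f₁ w| ≤ M * ‖z - w‖)
    (g₂ : E → E) (hg₂ : ∀ z, HasGradientAt f₂ (g₂ z) z)
    (hg₂lip : ∀ z w, ‖g₂ z - g₂ w‖ ≤ L * ‖z - w‖)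
    (x y : E) (g gy : E)
    (hg : ∀ z, f₀ z ≥ f₀ x + ⟪g, z - x⟫)
    (hgy : ∀ z, f₀ z ≥ f₀ y + ⟪gy, z - y⟫)
    (hhat : E → ℝ)
    (hhatdef : ∀ z, hhat z = f₂ z + f₁ y + ⟪gy - g₂ y, z - y⟫)
    (hbdd : BddBelow (Set.range hhat)) :
    ‖g‖ ^ 2 ≤ 6 * L * (f₀ x - f₀ y) + 6 * L * (f₀ y - ⨅ z, hhat z) + 6 * M ^ 2 := by
  obtain rfl : f₀ = f₁ + f₂ := funext hsum
  set u := g - g₂ x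
  set v := gy - g₂ y
  have hu : ‖u‖ ≤ M := (hf₁conv.hasSubgradientAt_sub_of_add (hg₂ x) hg).norm_le hM hf₁lip
  have hv_sub : HasSubgradientAt f₁ v y := hf₁conv.hasSubgradientAt_sub_of_add (hg₂ y) hgy
  have hv : ‖v‖ ≤ M := hv_sub.norm_le hM hf₁lip
  have hhat_le : hhat x ≤ (f₁ + f₂) x := by
    rw [hhatdef, Pi.add_apply]
    linarith [hv_sub x]
  have hw : ‖g₂ x + v‖ ^ 2 ≤ 2 * L * (hhat x - ⨅ z, hhat z) := by
    refine sq_norm_le_of_forall_le_add_inner_add_sq hL (fun b => ?_) hbdd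
    have hv_split : ⟪v, b - y⟫ = ⟪v, b - x⟫ + ⟪v, x - y⟫ := by
      rw [← inner_add_right, sub_add_sub_cancel]
    rw [hhatdef, hhatdef, inner_add_left, hv_split]
    linarith [le_add_inner_add_sq_of_lipschitz_gradient hg₂ hg₂lip x b]
  have hg_split : ‖g‖ ^ 2 ≤ 3 * (‖u‖ ^ 2 + ‖v‖ ^ 2 + ‖g₂ x + v‖ ^ 2) := by
    simpa [u, v] using sq_norm_sub_add_le u v (g₂ x + v)
  nlinarith [pow_le_pow_left₀ (norm_nonneg u) hu 2, pow_le_pow_left₀ (norm_nonneg v) hv 2]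

/-- Subgradient norm bound for a sum `f₀ = f⁽¹⁾ + f⁽²⁾` of an `M`-Lipschitz
convex function and an `L`-smooth convex function. -/
theorem stmt_14 {E : Type*} [NormedAddCommGroup E] [InnerProductSpace ℝ E]
    [FiniteDimensional ℝ E]
    (M L : ℝ) (hM : 0 ≤ M) (hL : 0 < L)
    (f₀ f₁ f₂ : E → ℝ) (hsum : ∀ z, f₀ z = f₁ z + f₂ z)
    (hf₁conv : ConvexOn ℝ Set.univ f₁)
    (hf₁lip : ∀ z w, |f₁ z - f₁ w| ≤ M * ‖z - w‖)
    (hf₂conv : ConvexOn ℝ Set.univ f₂)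
    (g₂ : E → E) (hg₂ : ∀ z, HasGradientAt f₂ (g₂ z) z)
    (hg₂lip : ∀ z w, ‖g₂ z - g₂ w‖ ≤ L * ‖z - w‖)
    (x y : E) (g gy : E)
    (hg : ∀ z, f₀ z ≥ f₀ x + ⟪g, z - x⟫)
    (hgy : ∀ z, f₀ z ≥ f₀ y + ⟪gy, z - y⟫)
    (hhat : E → ℝ)
    (hhatdef : ∀ z, hhat z = f₂ z + f₁ y + ⟪gy - g₂ y, z - y⟫)
    (hbdd : BddBelow (Set.range hhat)) :
    ‖g‖ ^ 2 ≤ 6 * L * (f₀ x - f₀ y) + 6 * L * (f₀ y - ⨅ z, hhat z) + 6 * M ^ 2 :=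
  stmt_14_general M L hM hL f₀ f₁ f₂ hsum hf₁conv hf₁lip g₂ hg₂ hg₂lip x y g gy hg hgy hhat hhatdef
    hbdd
end

section
/- Let f be μ-strongly convex (μ > 0) with minimizer x*, and let x_{k+1} = x_k − α_k g_k with g_k ∈ ∂f(x_k), stepsizes α_k = λ_k/(μ∑_{i=0}^k λ_i) for λ_k > 0. Suppose for reference point y ∈ E the oracle bound ‖g_k‖² ≤ L₀² + L₁(f(x_k) − f(y)) holds with L₀ ≥ 0 and L₁ > 0, and 0 < α_k ≤ 1/μ. Then for all k: ‖x_{k+1} − y‖² ≤ (1 + max{2, L₁/μ − 2}·L₁/μ)‖x_k − y‖² + (max{2, L₁/μ − 2}/μ)·(L₀²/L₁) + L₀²/μ², provided |f(x_k) − f(y)| ≤ L₁‖x_k − y‖² + L₀²/L₁. -/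
open RealInnerProductSpace

/-- One-step distance growth bound for the subgradient method under the
non-Lipschitz oracle bound `‖g_k‖² ≤ L₀² + L₁(f(x_k) - f(y))`. -/
theorem stmt_19 {E : Type*} [NormedAddCommGroup E] [InnerProductSpace ℝ E]
    [FiniteDimensional ℝ E]
    (μ L₀ L₁ : ℝ) (hμ : 0 < μ) (hL₀ : 0 ≤ L₀) (hL₁ : 0 < L₁)
    (f : E → ℝ) (xstar : E) (hmin : ∀ z, f xstar ≤ f z)
    (x g : ℕ → E) (lam α : ℕ → ℝ) (hlam : ∀ k, 0 < lam k)
    (hsub : ∀ k z, f z ≥ f (x k) + ⟪g k, z - x k⟫ + (μ / 2) * ‖z - x k‖ ^ 2)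
    (hα : ∀ k, α k = lam k / (μ * ∑ i ∈ Finset.range (k + 1), lam i))
    (hαle : ∀ k, α k ≤ 1 / μ)
    (hx : ∀ k, x (k + 1) = x k - α k • g k)
    (y : E)
    (horacle : ∀ k, ‖g k‖ ^ 2 ≤ L₀ ^ 2 + L₁ * (f (x k) - f y))
    (hdelta : ∀ k, |f (x k) - f y| ≤ L₁ * ‖x k - y‖ ^ 2 + L₀ ^ 2 / L₁) :
    ∀ k, ‖x (k + 1) - y‖ ^ 2 ≤
      (1 + max 2 (L₁ / μ - 2) * L₁ / μ) * ‖x k - y‖ ^ 2 +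
        (max 2 (L₁ / μ - 2) / μ) * (L₀ ^ 2 / L₁) + L₀ ^ 2 / μ ^ 2 := by
  intro k
  set a := α k with ha_def
  set M := max 2 (L₁ / μ - 2) with hM_def
  have hM2 : (2:ℝ) ≤ M := le_max_left _ _
  have hML : L₁ / μ - 2 ≤ M := le_max_right _ _
  have hMpos : 0 < M := lt_of_lt_of_le two_pos hM2
  -- positivity of a
  have hsum : 0 < ∑ i ∈ Finset.range (k + 1), lam i :=
    Finset.sum_pos (fun i _ => hlam i) (by simp)
  have ha0 : 0 < a := by
    rw [ha_def, hα k]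
    exact div_pos (hlam k) (mul_pos hμ hsum)
  have ha1 : a ≤ 1 / μ := hαle k
  have haμ : a * μ ≤ 1 := (le_div_iff₀ hμ).mp ha1
  -- expansion
  have hexp : ‖x (k + 1) - y‖ ^ 2 =
      ‖x k - y‖ ^ 2 - 2 * a * ⟪g k, x k - y⟫ + a ^ 2 * ‖g k‖ ^ 2 := by
    have h1 : x (k + 1) - y = (x k - y) - a • g k := by
      rw [hx k]; abel
    rw [h1, norm_sub_sq_real, real_inner_smul_right, norm_smul, mul_pow, Real.norm_eq_abs,
      sq_abs, real_inner_comm]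
    ring
  set r2 := ‖x k - y‖ ^ 2 with hr2
  set D := f (x k) - f y with hD
  have hr2nn : 0 ≤ r2 := sq_nonneg _
  -- subgradient inequality at y
  have hkey : ⟪g k, x k - y⟫ ≥ D + μ / 2 * r2 := by
    have h := hsub k y
    have h2 : ⟪g k, y - x k⟫ = - ⟪g k, x k - y⟫ := by
      rw [← inner_neg_right]; congr 1; abel
    have h3 : ‖y - x k‖ = ‖x k - y‖ := by rw [norm_sub_rev]
    rw [h2, h3] at h
    simp only [hD, hr2]
    linarith
  -- step inequality
  have hstep : ‖x (k + 1) - y‖ ^ 2 ≤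
      (1 - a * μ) * r2 + a * (a * L₁ - 2) * D + a ^ 2 * L₀ ^ 2 := by
    have hor : ‖g k‖ ^ 2 ≤ L₀ ^ 2 + L₁ * D := horacle k
    have h1 : a ^ 2 * ‖g k‖ ^ 2 ≤ a ^ 2 * (L₀ ^ 2 + L₁ * D) :=
      mul_le_mul_of_nonneg_left hor (sq_nonneg a)
    have h2 : a * (D + μ / 2 * r2) ≤ a * ⟪g k, x k - y⟫ :=
      mul_le_mul_of_nonneg_left hkey ha0.le
    rw [hexp]
    nlinarith [h1, h2]
  -- bound the middle term
  have habs1 : |a * (a * L₁ - 2)| ≤ M / μ := by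
    rw [abs_mul, abs_of_pos ha0]
    have h1 : |a * L₁ - 2| ≤ M := by
      rw [abs_le]
      constructor
      · nlinarith [mul_pos ha0 hL₁]
      · have : a * L₁ ≤ 1 / μ * L₁ := by
          exact mul_le_mul_of_nonneg_right ha1 hL₁.le
        have : a * L₁ ≤ L₁ / μ := by rw [one_div_mul_eq_div] at this; exact this
        linarith
    calc a * |a * L₁ - 2| ≤ (1/μ) * M := by
          apply mul_le_mul ha1 h1 (abs_nonneg _) (by positivity)
      _ = M / μ := by ring
  have hmid : a * (a * L₁ - 2) * D ≤ (M / μ) * (L₁ * r2 + L₀ ^ 2 / L₁) := by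
    calc a * (a * L₁ - 2) * D ≤ |a * (a * L₁ - 2) * D| := le_abs_self _
      _ = |a * (a * L₁ - 2)| * |D| := abs_mul _ _
      _ ≤ (M / μ) * (L₁ * r2 + L₀ ^ 2 / L₁) := by
          apply mul_le_mul habs1 (hdelta k) (abs_nonneg _) (by positivity)
  -- a^2 ≤ 1/μ^2
  have hasq : a ^ 2 ≤ 1 / μ ^ 2 := by
    have : a ^ 2 ≤ (1/μ) ^ 2 := by
      apply pow_le_pow_left₀ ha0.le ha1
    simpa [div_pow] using this
  have hfin : a ^ 2 * L₀ ^ 2 ≤ L₀ ^ 2 / μ ^ 2 := by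
    calc a ^ 2 * L₀ ^ 2 ≤ (1 / μ ^ 2) * L₀ ^ 2 :=
          mul_le_mul_of_nonneg_right hasq (sq_nonneg _)
      _ = L₀ ^ 2 / μ ^ 2 := by ring
  have h1aμ : (1 - a * μ) * r2 ≤ 1 * r2 := by
    apply mul_le_mul_of_nonneg_right _ hr2nn
    nlinarith [mul_pos ha0 hμ]
  calc ‖x (k + 1) - y‖ ^ 2
      ≤ (1 - a * μ) * r2 + a * (a * L₁ - 2) * D + a ^ 2 * L₀ ^ 2 := hstep
    _ ≤ 1 * r2 + (M / μ) * (L₁ * r2 + L₀ ^ 2 / L₁) + L₀ ^ 2 / μ ^ 2 := by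
        linarith
    _ = (1 + M * L₁ / μ) * r2 + (M / μ) * (L₀ ^ 2 / L₁) + L₀ ^ 2 / μ ^ 2 := by
        ring
end
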